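/- arXiv:1209.2966 — 2 statements merged into one kernel-verified Lean document; each statement's English description precedes it below -/
import Mathlib

section
/- Let B be a commutative unital real Banach algebra with norm φ, let d ≥ 1 be an integer, and let L : B → ℝ be a linear functional such that L(b^{2d}) ≥ 0 for all b ∈ B. Then L is continuous; in fact |L(a)| ≤ φ(a)·L(1) for all a ∈ B. -/
/-!
By the inverse function theorem `y ↦ y ^ n` covers a neighbourhood of `1`, and writing `1 - x` as a
telescoping product of elements close to `1` shows that every `u` with `‖u - 1‖ < 1` is an
`n`-th power. Hence `t • 1 + a` is a `2d`-th power whenever `‖a‖ < t`, so `0 ≤ t * L 1 + L a`;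
letting `t ↓ ‖a‖` and replacing `a` by `-a` gives `|L a| ≤ ‖a‖ * L 1`.
-/

open Filter Topology

theorem norm_inverse_one_sub_le {R : Type*} [NormedRing R] [HasSummableGeomSeries R] {x : R}
    {r : ℝ} (hx : ‖x‖ ≤ r) (hr : r < 1) : ‖Ring.inverse (1 - x)‖ ≤ ‖(1 : R)‖ - 1 + (1 - r)⁻¹ := by
  have hx1 : ‖x‖ < 1 := hx.trans_lt hr
  rw [← geom_series_eq_inverse x hx1]
  refine (tsum_geometric_le_of_norm_lt_one x hx1).trans ?_
  gcongr

section

variable {B : Type*} [NormedCommRing B] [NormedAlgebra ℝ B] [CompleteSpace B] {n : ℕ}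

theorem range_pow_mem_nhds_one (hn : n ≠ 0) : Set.range (fun y : B => y ^ n) ∈ 𝓝 1 := by
  have hmap := (hasStrictFDerivAt_pow (𝕜 := ℝ) n (x := (1 : B))).map_nhds_eq_of_surj <|
    LinearMap.range_eq_top.mpr fun z => ⟨(n : ℝ)⁻¹ • z, by
      simp [← Nat.cast_smul_eq_nsmul ℝ, hn]⟩
  simpa using hmap.ge (image_mem_map (univ_mem (f := 𝓝 (1 : B))))

/-- `1 - x = ∏_{j<m} (1 - (j+1)/m • x) (1 - j/m • x)⁻¹`, and each factor lies within `‖x‖ C / m`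
of `1`, where `C` bounds the inverses. -/
theorem exists_pow_eq_of_norm_sub_one_lt (hn : n ≠ 0) {u : B} (hu : ‖u - 1‖ < 1) :
    ∃ y : B, y ^ n = u := by
  obtain ⟨c, hc, hball⟩ := Metric.mem_nhds_iff.mp (range_pow_mem_nhds_one (B := B) hn)
  set x := 1 - u
  set r := ‖x‖
  have hr : r < 1 := by rwa [norm_sub_rev] at hu
  set C := ‖(1 : B)‖ + (1 - r)⁻¹
  have hC : 0 < C := add_pos_of_nonneg_of_pos (norm_nonneg _) (inv_pos.mpr (by linarith))
  obtain ⟨m, hm⟩ := exists_nat_gt (r * C / c)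
  have hm0 : (0 : ℝ) < m := lt_of_le_of_lt (by positivity) hm
  rw [div_lt_iff₀ hc] at hm
  let v : ℕ → B := fun j => 1 - ((j : ℝ) / m) • x
  have hv_norm : ∀ j ≤ m, ‖((j : ℝ) / m) • x‖ ≤ r := fun j hj => by
    rw [norm_smul, Real.norm_of_nonneg (by positivity)]
    exact mul_le_of_le_one_left (norm_nonneg x) (div_le_one_of_le₀ (by exact_mod_cast hj) hm0.le)
  have hv : ∀ j ≤ m, ∃ y : B, y ^ n = v j := by
    intro j
    induction j with
    | zero => exact fun _ => ⟨1, by simp [v]⟩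
    | succ j ih =>
      intro hj
      obtain ⟨y₁, hy₁⟩ := ih (by omega)
      have hunit : IsUnit (v j) :=
        isUnit_one_sub_of_norm_lt_one ((hv_norm j (by omega)).trans_lt hr)
      set w := v (j + 1) * Ring.inverse (v j)
      have hw_sub : w - 1 = -(((1 : ℝ) / m) • x) * Ring.inverse (v j) := by
        calc w - 1 = (v (j + 1) - v j) * Ring.inverse (v j) := by
              rw [sub_mul, Ring.mul_inverse_cancel _ hunit]
        _ = _ := by
              congr 1
              simp only [v]
              rw [Nat.cast_succ, add_div, add_smul]
              abel
      have hw : ‖w - 1‖ < c := by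
        calc ‖w - 1‖ ≤ r / m * C := by
              rw [hw_sub]
              refine (norm_mul_le _ _).trans ?_
              rw [norm_neg, norm_smul, Real.norm_of_nonneg (by positivity), one_div_mul_eq_div]
              gcongr
              exact (norm_inverse_one_sub_le (hv_norm j (by omega)) hr).trans (by linarith)
        _ < c := by rw [div_mul_eq_mul_div, div_lt_iff₀ hm0]; linarith
      obtain ⟨y₂, hy₂ : y₂ ^ n = w⟩ := hball (by rwa [Metric.mem_ball, dist_eq_norm])
      refine ⟨y₁ * y₂, ?_⟩
      rw [mul_pow, hy₁, hy₂, mul_left_comm, Ring.mul_inverse_cancel _ hunit, mul_one]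
  simpa [v, hm0.ne', x] using hv m le_rfl

theorem exists_pow_eq_smul_one_add (hn : n ≠ 0) {a : B} {t : ℝ} (ht : ‖a‖ < t) :
    ∃ y : B, y ^ n = t • 1 + a := by
  have ht0 : 0 < t := (norm_nonneg a).trans_lt ht
  obtain ⟨y, hy⟩ := exists_pow_eq_of_norm_sub_one_lt hn (u := 1 + t⁻¹ • a) <| by
    rwa [add_sub_cancel_left, norm_smul, Real.norm_of_nonneg (inv_nonneg.mpr ht0.le),
      ← div_eq_inv_mul, div_lt_one ht0]
  refine ⟨(t ^ (n : ℝ)⁻¹) • y, ?_⟩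
  rw [smul_pow, hy, Real.rpow_inv_natCast_pow ht0.le hn, smul_add, smul_inv_smul₀ ht0.ne']

theorem neg_map_le_norm_mul_map_one (L : B →ₗ[ℝ] ℝ) (hn : n ≠ 0) (hL : ∀ b : B, 0 ≤ L (b ^ n))
    (a : B) : -L a ≤ ‖a‖ * L 1 := by
  have h : ∀ t ∈ Set.Ioi ‖a‖, -L a ≤ t * L 1 := fun t ht => by
    obtain ⟨y, hy⟩ := exists_pow_eq_smul_one_add hn ht
    have := hL y
    rw [hy, map_add, map_smul, smul_eq_mul] at this
    linarith
  exact ge_of_tendsto (((continuous_mul_const (L 1)).tendsto _).mono_left nhdsWithin_le_nhds)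
    (eventually_nhdsWithin_of_forall h)

theorem abs_map_le_norm_mul_map_one (L : B →ₗ[ℝ] ℝ) (hn : n ≠ 0) (hL : ∀ b : B, 0 ≤ L (b ^ n))
    (a : B) : |L a| ≤ ‖a‖ * L 1 := by
  have h := neg_map_le_norm_mul_map_one L hn hL (-a)
  rw [norm_neg, map_neg, neg_neg] at h
  exact abs_le.mpr ⟨neg_le.mp (neg_map_le_norm_mul_map_one L hn hL a), h⟩

end

/-- Automatic continuity: a linear functional on a commutative unital real Banach algebra
which is nonnegative on `2d`-th powers is continuous, and `|L a| ≤ ‖a‖ · L 1`. -/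
theorem stmt4 {B : Type*} [NormedCommRing B] [NormedAlgebra ℝ B] [CompleteSpace B]
    (d : ℕ) (hd : 1 ≤ d) (L : B →ₗ[ℝ] ℝ) (hL : ∀ b : B, 0 ≤ L (b ^ (2 * d))) :
    Continuous L ∧ ∀ a : B, |L a| ≤ ‖a‖ * L 1 := by
  have hbound := abs_map_le_norm_mul_map_one L (by omega) hL
  exact ⟨AddMonoidHomClass.continuous_of_bound L (L 1) fun a => by
    simpa [mul_comm] using hbound a, hbound⟩
end

section
/- Let A be a commutative unital ℝ-algebra, ρ a submultiplicative seminorm on A, d ≥ 1 an integer, and S a Σ A^{2d}-module of A. Then the ρ-closure of S equals the set of all a ∈ A such that α(a) ≥ 0 for every ρ-continuous unital ℝ-algebra homomorphism α : A → ℝ that is nonnegative on S. -/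
/-!
Let `C` be the closure of `S`; it is again a `Σ A^n`-module (`n = 2d`), hence a closed convex
cone. A point `a ∉ C` is separated from `C` by a continuous linear functional, so it is negative
at some linear functional `φ ≥ 0` on `C` with `φ 1 ≤ 1`. These functionals form a compact convex
subset of `ℝ^A`: they satisfy `0 ≤ φ (x ^ n) ≤ ‖x ^ n‖ φ 1`, and `n`-th powers span `A`. By
Krein–Milman, `a` is negative at an extreme point `φ`. If `‖x ^ n‖ < 1`, then `(1 - x ^ n) C ⊆ C`
by a geometric series in `x ^ n`, so `φ = φ (x ^ n * ·) + φ ((1 - x ^ n) * ·)` is a sum of two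
positive functionals; extremality forces `φ (x ^ n * b) = φ (x ^ n) φ b`, and `φ` is a character.
It is continuous because `|φ b| ^ n = φ (b ^ n) ≤ ‖b‖ ^ n`.
-/

/-- The topology on `A` induced by a seminorm `ρ`. -/
noncomputable def Seminorm.mtopology {A : Type*} [AddCommGroup A] [Module ℝ A]
    (ρ : Seminorm ℝ A) : TopologicalSpace A :=
  ρ.toSeminormedAddCommGroup.toUniformSpace.toTopologicalSpace

open Filter Set Topology

theorem fwdDiff_iter_mem {M G R : Type*} [AddCommMonoid M] [AddCommGroup G] [Ring R] [Module R G]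
    {p : Submodule R G} {f : M → G} (hf : ∀ x, f x ∈ p) (h : M) (m : ℕ) (y : M) :
    (fwdDiff h)^[m] f y ∈ p := by
  rw [fwdDiff_iter_eq_sum_shift]
  exact p.sum_mem fun k _ => zsmul_mem (hf _) _

theorem span_range_pow_eq_top (R : Type*) {A : Type*} [Field R] [CharZero R] [CommRing A]
    [Algebra R A] {n : ℕ} (hn : n ≠ 0) :
    Submodule.span R (range fun x : A => x ^ n) = ⊤ := by
  obtain ⟨m, rfl⟩ := Nat.exists_eq_add_one_of_ne_zero hn
  set V := Submodule.span R (range fun x : A => x ^ (m + 1))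
  have hpow : ∀ x : A, x ^ (m + 1) ∈ V := fun x => Submodule.subset_span (mem_range_self x)
  refine Submodule.eq_top_iff'.2 fun a => ?_
  -- only the `r ^ m` term of `(r + a) ^ (m + 1) - r ^ (m + 1)` survives `m` forward differences
  have hexpand : (fun r : A => (r + a) ^ (m + 1)) =
      (fun r => ∑ j ∈ Finset.range m, ((m + 1).choose j * a ^ (m + 1 - j)) * r ^ j) +
        ((m + 1 : A) * a) • (fun r => r ^ m) + fun r => r ^ (m + 1) := by
    funext r
    simp only [Pi.add_apply, Pi.smul_apply, smul_eq_mul, add_pow, Finset.sum_range_succ]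
    simp [Nat.choose_succ_self_right, mul_comm, mul_left_comm, mul_assoc]
  have hdiff := congrFun (congrArg (fwdDiff (1 : A))^[m] hexpand) 0
  simp only [fwdDiff_iter_add, fwdDiff_iter_sum_mul_pow_eq_zero, fwdDiff_iter_const_smul,
    fwdDiff_iter_eq_factorial, zero_add, Pi.add_apply, Pi.smul_apply, Pi.natCast_apply] at hdiff
  have hfac : ((m + 1).factorial : R) • a ∈ V := by
    have h := sub_mem (fwdDiff_iter_mem (fun r => hpow (r + a)) 1 m 0) (fwdDiff_iter_mem hpow 1 m 0)
    rw [hdiff, add_sub_cancel_right, smul_eq_mul] at h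
    convert h using 1
    rw [Nat.cast_smul_eq_nsmul, nsmul_eq_mul, Nat.factorial_succ]
    push_cast
    ring
  exact (Submodule.smul_mem_iff _ (Nat.cast_ne_zero.2 (Nat.factorial_ne_zero _))).1 hfac

theorem exists_pow_eq_smul_pow {A : Type*} [Semiring A] [Algebra ℝ A] {n : ℕ} (hn : n ≠ 0) {t : ℝ}
    (ht : 0 ≤ t) (x : A) : ∃ y : A, y ^ n = t • x ^ n :=
  ⟨t ^ (n⁻¹ : ℝ) • x, by rw [smul_pow, Real.rpow_inv_natCast_pow ht hn]⟩

theorem exists_pow_eq_inv_smul_pow_norm_lt_one {A : Type*} [SeminormedRing A] [NormedAlgebra ℝ A]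
    {n : ℕ} (hn : n ≠ 0) {x : A} {r : ℝ} (hr : ‖x ^ n‖ < r) :
    ∃ y : A, y ^ n = r⁻¹ • x ^ n ∧ ‖y ^ n‖ < 1 := by
  have hr0 : 0 < r := (norm_nonneg _).trans_lt hr
  obtain ⟨y, hy⟩ := exists_pow_eq_smul_pow hn (inv_nonneg.2 hr0.le) x
  refine ⟨y, hy, ?_⟩
  rwa [hy, norm_smul, Real.norm_of_nonneg (inv_nonneg.2 hr0.le), inv_mul_lt_one₀ hr0]

theorem mem_of_one_sub_mul_mem {A : Type*} [SeminormedRing A] {C : Set A} (hC : IsClosed C)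
    (h0 : (0 : A) ∈ C) (hadd : ∀ s ∈ C, ∀ t ∈ C, s + t ∈ C) {c y : A} (hc : ‖c‖ < 1)
    (h : ∀ k : ℕ, c ^ k * ((1 - c) * y) ∈ C) : y ∈ C := by
  have hsum : ∀ N, ∑ k ∈ Finset.range N, c ^ k * ((1 - c) * y) = y - c ^ N * y := fun N => by
    rw [← Finset.sum_mul, ← mul_assoc, geom_sum_mul_neg, sub_mul, one_mul]
  have hlim : Tendsto (fun N => ∑ k ∈ Finset.range N, c ^ k * ((1 - c) * y)) atTop (𝓝 y) := by
    simpa [hsum] using tendsto_const_nhds.sub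
      ((tendsto_pow_atTop_nhds_zero_of_norm_lt_one hc).mul_const y)
  exact hC.mem_of_tendsto hlim (Eventually.of_forall fun N =>
    Finset.sum_induction _ (· ∈ C) (fun s t hs ht => hadd s hs t ht) h0 fun k _ => h k)

/-- `S` is a `Σ A^n`-module. -/
structure IsPowerModule {A : Type*} [Semiring A] (n : ℕ) (S : Set A) : Prop where
  one_mem : (1 : A) ∈ S
  add_mem : ∀ s ∈ S, ∀ t ∈ S, s + t ∈ S
  pow_mul_mem : ∀ a : A, ∀ s ∈ S, a ^ n * s ∈ S

namespace IsPowerModule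

section Semiring

variable {A : Type*} [Semiring A] {n : ℕ} {S : Set A}

theorem pow_mem (hS : IsPowerModule n S) (a : A) : a ^ n ∈ S := by
  simpa using hS.pow_mul_mem a 1 hS.one_mem

theorem closure [TopologicalSpace A] [IsTopologicalSemiring A] (hS : IsPowerModule n S) :
    IsPowerModule n (_root_.closure S) where
  one_mem := subset_closure hS.one_mem
  add_mem _ hs _ ht := map_mem_closure₂ continuous_add hs ht hS.add_mem
  pow_mul_mem a _ hs := map_mem_closure (continuous_const_mul _) hs (hS.pow_mul_mem a)

variable [Algebra ℝ A]

theorem smul_mem (hS : IsPowerModule n S) (hn : n ≠ 0) {t : ℝ} (ht : 0 ≤ t) {s : A}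
    (hs : s ∈ S) : t • s ∈ S := by
  obtain ⟨y, hy⟩ := exists_pow_eq_smul_pow hn ht (1 : A)
  simpa [hy] using hS.pow_mul_mem y s hs

theorem zero_mem (hS : IsPowerModule n S) (hn : n ≠ 0) : (0 : A) ∈ S := by
  simpa using hS.smul_mem hn le_rfl hS.one_mem

end Semiring

variable {A : Type*} [SeminormedCommRing A] [NormedAlgebra ℝ A] {n : ℕ} {C : Set A}

theorem one_sub_pow_mul_mem (hC : IsPowerModule n C) (hn : n ≠ 0) (hCc : IsClosed C) {x : A}
    (hx : ‖x ^ n‖ < 1) {s : A} (hs : s ∈ C) : (1 - x ^ n) * s ∈ C := by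
  obtain ⟨m, rfl⟩ := Nat.exists_eq_add_one_of_ne_zero hn
  -- peel the factors off `(1 - x ^ n) ^ n * s ∈ C` one at a time
  have hstep : ∀ j, (∀ s ∈ C, (1 - x ^ (m + 1)) ^ (j + 1) * s ∈ C) →
      ∀ s ∈ C, (1 - x ^ (m + 1)) ^ j * s ∈ C := fun j hj s hs =>
    mem_of_one_sub_mul_mem hCc (hC.zero_mem hn) hC.add_mem hx fun k => by
      rw [← mul_assoc (1 - _), ← pow_succ', pow_right_comm x (m + 1) k]
      exact hC.pow_mul_mem _ _ (hj s hs)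
  simpa using Nat.decreasingInduction
    (motive := fun j _ => ∀ s ∈ C, (1 - x ^ (m + 1)) ^ (j + 1) * s ∈ C)
    (fun j _ => hstep (j + 1)) (fun s hs => hC.pow_mul_mem _ s hs) (Nat.zero_le m) s hs

theorem apply_pow_le (hC : IsPowerModule n C) (hn : n ≠ 0) (hCc : IsClosed C)
    {φ : A →ₗ[ℝ] ℝ} (hφ : ∀ s ∈ C, 0 ≤ φ s) (x : A) : φ (x ^ n) ≤ ‖x ^ n‖ * φ 1 := by
  refine ge_of_tendsto (x := 𝓝[>] ‖x ^ n‖)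
    (((continuous_id.mul continuous_const).tendsto _).mono_left nhdsWithin_le_nhds)
    (eventually_nhdsWithin_of_forall fun r (hr : ‖x ^ n‖ < r) => ?_)
  obtain ⟨y, hy, hy1⟩ := exists_pow_eq_inv_smul_pow_norm_lt_one hn hr
  have h := hφ _ (hC.one_sub_pow_mul_mem hn hCc hy1 hC.one_mem)
  rwa [mul_one, hy, map_sub, map_smul, smul_eq_mul, sub_nonneg,
    inv_mul_le_iff₀ ((norm_nonneg _).trans_lt hr)] at h

theorem continuous_algHom_of_nonneg (hC : IsPowerModule n C) (hn : Even n) (hn0 : n ≠ 0)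
    (hCc : IsClosed C) (α : A →ₐ[ℝ] ℝ) (hα : ∀ s ∈ C, 0 ≤ α s) : Continuous α := by
  refine AddMonoidHomClass.continuous_of_bound α 1 fun b => ?_
  have hpow : |α b| ^ n ≤ ‖b‖ ^ n := calc
    |α b| ^ n = α (b ^ n) := by rw [hn.pow_abs, map_pow]
    _ ≤ ‖b ^ n‖ := by simpa using hC.apply_pow_le hn0 hCc (φ := α.toLinearMap) hα b
    _ ≤ ‖b‖ ^ n := norm_pow_le' b (Nat.pos_of_ne_zero hn0)
  rw [Real.norm_eq_abs, one_mul]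
  exact (pow_le_pow_iff_left₀ (abs_nonneg _) (norm_nonneg _) hn0).1 hpow

theorem exists_abs_apply_le (hC : IsPowerModule n C) (hn : n ≠ 0) (hCc : IsClosed C) (b : A) :
    ∃ B, ∀ φ : A →ₗ[ℝ] ℝ, (∀ s ∈ C, 0 ≤ φ s) → φ 1 ≤ 1 → |φ b| ≤ B := by
  have hb : b ∈ Submodule.span ℝ (range fun x : A => x ^ n) := by
    rw [span_range_pow_eq_top ℝ hn]; trivial
  induction hb using Submodule.span_induction with
  | mem _ h =>
    obtain ⟨x, rfl⟩ := h
    refine ⟨‖x ^ n‖, fun φ hφ hφ1 => ?_⟩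
    rw [abs_of_nonneg (hφ _ (hC.pow_mem x))]
    exact (hC.apply_pow_le hn hCc hφ x).trans (mul_le_of_le_one_right (norm_nonneg _) hφ1)
  | zero => exact ⟨0, fun φ _ _ => by simp⟩
  | add y z _ _ hy hz =>
    obtain ⟨By, hBy⟩ := hy
    obtain ⟨Bz, hBz⟩ := hz
    refine ⟨By + Bz, fun φ hφ hφ1 => ?_⟩
    rw [map_add]
    exact (abs_add_le _ _).trans (add_le_add (hBy φ hφ hφ1) (hBz φ hφ hφ1))
  | smul r y _ hy =>
    obtain ⟨B, hB⟩ := hy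
    refine ⟨|r| * B, fun φ hφ hφ1 => ?_⟩
    rw [map_smul, smul_eq_mul, abs_mul]
    exact mul_le_mul_of_nonneg_left (hB φ hφ hφ1) (abs_nonneg r)

end IsPowerModule

section ConeBase

variable {E : Type*} [AddCommGroup E] [Module ℝ E] {K : Set E} {e : E →ₗ[ℝ] ℝ}

theorem apply_eq_one_of_mem_extremePoints (hK : ∀ x ∈ K, ∀ t : ℝ, 0 ≤ t → t • x ∈ K)
    (he : ∀ x ∈ K, 0 ≤ e x) {x : E} (hx : x ∈ extremePoints ℝ {y ∈ K | e y ≤ 1}) (hx0 : x ≠ 0) :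
    e x = 1 := by
  obtain ⟨⟨hxK, hx1⟩, hext⟩ := hx
  by_contra hne
  have hlt : e x < 1 := lt_of_le_of_ne hx1 hne
  have hpos := he x hxK
  -- `x` lies strictly between `0` and `t • x`, and still `e (t • x) ≤ 1`
  set t : ℝ := 2 / (1 + e x)
  have ht : 1 < t := by rw [lt_div_iff₀ (by linarith)]; linarith
  have htx : e (t • x) ≤ 1 := by
    rw [map_smul, smul_eq_mul, div_mul_eq_mul_div, div_le_one (by linarith)]; linarith
  refine hx0 (hext (x₁ := 0) ⟨by simpa using hK x hxK 0 le_rfl, by simp⟩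
    ⟨hK x hxK t (by linarith), htx⟩ ⟨1 - t⁻¹, t⁻¹, sub_pos.2 (inv_lt_one_of_one_lt₀ ht),
      by positivity, by ring, ?_⟩).symm
  rw [smul_zero, zero_add, smul_smul, inv_mul_cancel₀ (by positivity), one_smul]

theorem eq_smul_of_mem_extremePoints (hK : ∀ x ∈ K, ∀ t : ℝ, 0 ≤ t → t • x ∈ K)
    (he : ∀ x ∈ K, 0 ≤ e x) (hKe : ∀ x ∈ K, e x = 0 → x = 0) {x : E}
    (hx : x ∈ extremePoints ℝ {y ∈ K | e y ≤ 1}) (hx1 : e x = 1) {y : E} (hy : y ∈ K)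
    (hxy : x - y ∈ K) : y = e y • x := by
  have hexy : e (x - y) = 1 - e y := by rw [map_sub, hx1]
  rcases (he y hy).eq_or_lt with h0 | hpos
  · rw [← h0, zero_smul]
    exact hKe y hy h0.symm
  rcases (he _ hxy).eq_or_lt with h1 | hlt
  · have hyx : y = x := (sub_eq_zero.1 (hKe _ hxy h1.symm)).symm
    rw [hyx, hx1, one_smul]
  rw [hexy, sub_pos] at hlt
  have hmid := hx.2 (x₁ := (e y)⁻¹ • y) (x₂ := (1 - e y)⁻¹ • (x - y))
    ⟨hK y hy _ (inv_nonneg.2 hpos.le), by rw [map_smul, smul_eq_mul, inv_mul_cancel₀ hpos.ne']⟩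
    ⟨hK _ hxy _ (inv_nonneg.2 (sub_pos.2 hlt).le),
      by rw [map_smul, smul_eq_mul, hexy, inv_mul_cancel₀ (sub_pos.2 hlt).ne']⟩
    ⟨e y, 1 - e y, hpos, sub_pos.2 hlt, by ring, by
      rw [smul_smul, smul_smul, mul_inv_cancel₀ hpos.ne', mul_inv_cancel₀ (sub_pos.2 hlt).ne',
        one_smul, one_smul, add_sub_cancel]⟩
  rw [← hmid, smul_smul, mul_inv_cancel₀ hpos.ne', one_smul]

end ConeBase

theorem exists_mem_extremePoints_apply_lt {E : Type*} [AddCommGroup E] [Module ℝ E]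
    [TopologicalSpace E] [T2Space E] [IsTopologicalAddGroup E] [ContinuousSMul ℝ E]
    [LocallyConvexSpace ℝ E] {T : Set E} (hT : IsCompact T) (hTc : Convex ℝ T) (f : E →L[ℝ] ℝ)
    {x : E} (hx : x ∈ T) {c : ℝ} (hfx : f x < c) : ∃ y ∈ extremePoints ℝ T, f y < c := by
  by_contra! h
  have hsub : T ⊆ {y | c ≤ f y} := by
    rw [← closure_convexHull_extremePoints hT hTc]
    exact closure_minimal (convexHull_min h (convex_halfSpace_ge f.isLinear c))
      (isClosed_le continuous_const f.continuous)
  exact (hsub hx).not_gt hfx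

/-- Positive functionals sit in the product space `A → ℝ`, whose topology of pointwise
convergence makes the normalized ones compact. -/
def positiveFunctionals {A : Type*} [CommRing A] [Algebra ℝ A] (C : Set A) : Set (A → ℝ) :=
  range ((⇑) : (A →ₗ[ℝ] ℝ) → A → ℝ) ∩ {L | ∀ s ∈ C, 0 ≤ L s}

section PositiveFunctionals

variable {A : Type*} [CommRing A] [Algebra ℝ A] {C : Set A}

theorem smul_mem_positiveFunctionals {L : A → ℝ} (hL : L ∈ positiveFunctionals C) {t : ℝ}
    (ht : 0 ≤ t) : t • L ∈ positiveFunctionals C := by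
  obtain ⟨⟨φ, rfl⟩, hφ⟩ := hL
  exact ⟨⟨t • φ, rfl⟩, fun s hs => mul_nonneg ht (hφ s hs)⟩

theorem convex_positiveFunctionals : Convex ℝ {L ∈ positiveFunctionals C | L 1 ≤ 1} := by
  rintro _ ⟨⟨⟨φ, rfl⟩, hφ⟩, hφ1⟩ _ ⟨⟨⟨ψ, rfl⟩, hψ⟩, hψ1⟩ a b ha hb hab
  refine ⟨⟨⟨a • φ + b • ψ, rfl⟩, fun s hs => ?_⟩, ?_⟩
  · exact add_nonneg (mul_nonneg ha (hφ s hs)) (mul_nonneg hb (hψ s hs))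
  · change a * φ 1 + b * ψ 1 ≤ 1
    nlinarith

end PositiveFunctionals

namespace IsPowerModule

variable {A : Type*} [SeminormedCommRing A] [NormedAlgebra ℝ A] {n : ℕ} {C : Set A}

theorem eq_zero_of_mem_positiveFunctionals (hC : IsPowerModule n C) (hn : n ≠ 0)
    (hCc : IsClosed C) {L : A → ℝ} (hL : L ∈ positiveFunctionals C) (hL1 : L 1 = 0) : L = 0 := by
  obtain ⟨⟨φ, rfl⟩, hφ⟩ := hL
  suffices φ = 0 by simp [this]
  refine LinearMap.ext_on_range (span_range_pow_eq_top ℝ hn) fun x => ?_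
  exact le_antisymm (by simpa [hL1] using hC.apply_pow_le hn hCc hφ x) (hφ _ (hC.pow_mem x))

theorem isCompact_positiveFunctionals (hC : IsPowerModule n C) (hn : n ≠ 0) (hCc : IsClosed C) :
    IsCompact {L ∈ positiveFunctionals C | L 1 ≤ 1} := by
  choose B hB using hC.exists_abs_apply_le hn hCc
  have hpos : IsClosed {L : A → ℝ | ∀ s ∈ C, 0 ≤ L s} := by
    simp only [ofPred_forall]
    exact isClosed_biInter fun s _ => isClosed_le continuous_const (continuous_apply s)
  refine (isCompact_univ_pi fun b => isCompact_Icc (a := -B b) (b := B b)).of_isClosed_subset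
    (((LinearMap.isClosed_range_coe A ℝ (RingHom.id ℝ)).inter hpos).inter
      (isClosed_le (continuous_apply 1) continuous_const)) ?_
  rintro _ ⟨⟨⟨φ, rfl⟩, hφ⟩, hφ1⟩ b -
  exact abs_le.1 (hB b φ hφ hφ1)

theorem apply_one_eq_one_of_mem_extremePoints (hC : IsPowerModule n C) {L : A → ℝ}
    (hL : L ∈ extremePoints ℝ {L ∈ positiveFunctionals C | L 1 ≤ 1}) (hL0 : L ≠ 0) : L 1 = 1 :=
  apply_eq_one_of_mem_extremePoints (e := LinearMap.proj 1)
    (fun _ hL _ ht => smul_mem_positiveFunctionals hL ht) (fun _ hL => hL.2 1 hC.one_mem) hL hL0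

theorem map_mul_of_mem_extremePoints (hC : IsPowerModule n C) (hn : n ≠ 0) (hCc : IsClosed C)
    {φ : A →ₗ[ℝ] ℝ} (hφ : ⇑φ ∈ extremePoints ℝ {L ∈ positiveFunctionals C | L 1 ≤ 1})
    (hφ1 : φ 1 = 1) (a b : A) : φ (a * b) = φ a * φ b := by
  have hφC : ∀ s ∈ C, 0 ≤ φ s := hφ.1.1.2
  have hsmall : ∀ x : A, ‖x ^ n‖ < 1 → ∀ b, φ (x ^ n * b) = φ (x ^ n) * φ b := by
    intro x hx b
    -- `φ = φ (x ^ n * ·) + φ ((1 - x ^ n) * ·)` splits into two positive functionals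
    have h := eq_smul_of_mem_extremePoints (e := LinearMap.proj 1)
      (fun _ hL _ ht => smul_mem_positiveFunctionals hL ht) (fun _ hL => hL.2 1 hC.one_mem)
      (fun _ hL => hC.eq_zero_of_mem_positiveFunctionals hn hCc hL) hφ hφ1
      (y := ⇑(φ ∘ₗ LinearMap.mulLeft ℝ (x ^ n)))
      ⟨⟨_, rfl⟩, fun s hs => hφC _ (hC.pow_mul_mem x s hs)⟩
      ⟨⟨φ ∘ₗ LinearMap.mulLeft ℝ (1 - x ^ n), by ext; simp [sub_mul]⟩,
        fun s hs => by simpa [sub_mul] using hφC _ (hC.one_sub_pow_mul_mem hn hCc hx hs)⟩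
    simpa using congrFun h b
  have hpow : ∀ x b, φ (x ^ n * b) = φ (x ^ n) * φ b := by
    intro x b
    obtain ⟨y, hy, hy1⟩ := exists_pow_eq_inv_smul_pow_norm_lt_one hn (lt_add_one ‖x ^ n‖)
    have h := hsmall y hy1 b
    rw [hy, smul_mul_assoc, map_smul, map_smul, smul_eq_mul, smul_eq_mul, mul_assoc] at h
    exact mul_left_cancel₀ (inv_ne_zero (by positivity)) h
  have h := LinearMap.ext_on_range (span_range_pow_eq_top ℝ hn)
    (f := φ ∘ₗ LinearMap.mulRight ℝ b) (g := φ b • φ) fun x => (hpow x b).trans (mul_comm _ _)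
  simpa [mul_comm] using LinearMap.congr_fun h a

theorem closure_eq_setOf_forall_nonneg {S : Set A} (hS : IsPowerModule n S) (hn : Even n)
    (hn0 : n ≠ 0) : _root_.closure S =
      {a | ∀ α : A →ₐ[ℝ] ℝ, Continuous α → (∀ s ∈ S, 0 ≤ α s) → 0 ≤ α a} := by
  refine Subset.antisymm (fun a ha α hα hαS => ?_) fun a ha => ?_
  · exact closure_minimal hαS (isClosed_le continuous_const hα) ha
  by_contra haC
  set C := _root_.closure S
  have hC := hS.closure
  have hCc : IsClosed C := isClosed_closure
  obtain ⟨f, hfC, hfa⟩ := ProperCone.hyperplane_separation_point (E := A) (x₀ := a)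
    { carrier := C, add_mem' := fun {x y} hx hy => hC.add_mem x hx y hy
      zero_mem' := hC.zero_mem hn0, smul_mem' := fun t x hx => hC.smul_mem hn0 t.2 hx
      isClosed' := hCc } haC
  have hf1 : 0 ≤ f 1 := hfC 1 hC.one_mem
  have hfT : (1 + f 1)⁻¹ • ⇑f ∈ {L ∈ positiveFunctionals C | L 1 ≤ 1} := by
    refine ⟨smul_mem_positiveFunctionals ⟨⟨f.toLinearMap, rfl⟩, hfC⟩ (by positivity), ?_⟩
    rw [Pi.smul_apply, smul_eq_mul, inv_mul_le_one₀ (by positivity)]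
    linarith
  obtain ⟨L, hL, hLa⟩ := exists_mem_extremePoints_apply_lt
    (hC.isCompact_positiveFunctionals hn0 hCc) convex_positiveFunctionals
    (ContinuousLinearMap.proj a) hfT (c := 0) (mul_neg_of_pos_of_neg (by positivity) hfa)
  obtain ⟨φ, rfl⟩ := hL.1.1.1
  have hφ1 : φ 1 = 1 := hC.apply_one_eq_one_of_mem_extremePoints hL fun h => by simp [h] at hLa
  let α : A →ₐ[ℝ] ℝ := AlgHom.ofLinearMap φ hφ1 (hC.map_mul_of_mem_extremePoints hn0 hCc hL hφ1)
  have hαC : ∀ s ∈ C, 0 ≤ α s := hL.1.1.2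
  have hα := hC.continuous_algHom_of_nonneg hn hn0 hCc α hαC
  exact (ha α hα fun s hs => hαC s (subset_closure hs)).not_gt hLa

end IsPowerModule

/-- The `ρ`-closure of a `Σ A^{2d}`-module `S` of `A` equals the set of elements `a` with
`α a ≥ 0` for every `ρ`-continuous unital ℝ-algebra homomorphism `α : A → ℝ` nonnegative
on `S`. -/
theorem stmt8 {A : Type*} [CommRing A] [Algebra ℝ A] (ρ : Seminorm ℝ A)
    (hsub : ∀ x y : A, ρ (x * y) ≤ ρ x * ρ y) (d : ℕ) (hd : 1 ≤ d)
    (S : Set A) (h1 : (1 : A) ∈ S) (hadd : ∀ s ∈ S, ∀ t ∈ S, s + t ∈ S)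
    (hmul : ∀ a : A, ∀ s ∈ S, a ^ (2 * d) * s ∈ S) :
    @closure A ρ.mtopology S =
      {a : A | ∀ α : A →ₐ[ℝ] ℝ, @Continuous A ℝ ρ.mtopology inferInstance ⇑α →
        (∀ s ∈ S, 0 ≤ α s) → 0 ≤ α a} := by
  let _ : SeminormedCommRing A :=
    { ρ.toSeminormedAddCommGroup, ‹CommRing A› with norm_mul_le := hsub }
  let _ : NormedAlgebra ℝ A :=
    { ‹Algebra ℝ A› with norm_smul_le := fun r x => (map_smul_eq_mul ρ r x).le }
  exact IsPowerModule.closure_eq_setOf_forall_nonneg ⟨h1, hadd, hmul⟩ (even_two_mul d) (by omega)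
end
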